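/- arXiv:math/0507110 — 10 statements merged into one kernel-verified Lean document; each statement's English description precedes it below -/
import Mathlib

section
/- Let H be a spanning subgraph of a graph G and let φ_H be the signing of G with co-support H (φ_H(e)=1 if e ∈ E(H), φ_H(e)=-1 otherwise). Then the chromatic number of H with respect to G equals the chromatic number of the double covering G^{φ_H}. -/
open SimpleGraph

attribute [local instance] Classical.propDecidable

variable {V : Type*}

/-- `f` is a proper coloring of `H`. -/
def IsProperColoring (H : SimpleGraph V) (f : V → ℕ) : Prop :=
  ∀ u v, H.Adj u v → f u ≠ f v

/-- `f` and `g` are compatible colorings of the spanning subgraph `H` with respect to `G`: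
both are proper colorings of `H` and for every edge of `G` not in `H`, `f u ≠ g v`. -/
def CompatiblePair (G H : SimpleGraph V) (f g : V → ℕ) : Prop :=
  IsProperColoring H f ∧ IsProperColoring H g ∧
    ∀ u v, G.Adj u v → ¬ H.Adj u v → f u ≠ g v

/-- The chromatic number of `H` with respect to `G`: the least `n` such that `H` admits a
pair of compatible colorings with colors `{0, …, n-1}`. -/
noncomputable def relChrom (G H : SimpleGraph V) : ℕ :=
  sInf {n | ∃ f g : V → ℕ, (∀ v, f v < n) ∧ (∀ v, g v < n) ∧ CompatiblePair G H f g}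

/-- The (ordinary) chromatic number of a graph, as a natural number. -/
noncomputable def chrom (G : SimpleGraph V) : ℕ := sInf {n | G.Colorable n}

/-- The Seidel switch `H_X` of a spanning subgraph `H` of `G` at a set `X` of vertices. -/
def seidelSwitch (G H : SimpleGraph V) (X : Set V) : SimpleGraph V :=
  SimpleGraph.fromRel fun u v =>
    ((u ∈ X ↔ v ∈ X) ∧ H.Adj u v) ∨ (¬(u ∈ X ↔ v ∈ X) ∧ G.Adj u v ∧ ¬ H.Adj u v)

/-- The co-support of a signing `φ` of `G`: the spanning subgraph whose edges are the
edges of `G` with sign `+1` (here, where `φ` holds). -/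
def cosupport (G : SimpleGraph V) (φ : V → V → Prop) : SimpleGraph V :=
  SimpleGraph.fromRel fun u v => G.Adj u v ∧ φ u v

/-- Switching of a signing at a vertex set `X`: the sign of an edge is reversed exactly
when the edge has exactly one endpoint in `X` (`True` plays the role of `+1`). -/
def switchSign (φ : V → V → Prop) (X : Set V) : V → V → Prop :=
  fun u v => φ u v ↔ (u ∈ X ↔ v ∈ X)

/-- The double covering `G^φ` of `G` determined by a signing `φ` (with `true ↔ +1`;
second coordinates agree along an edge iff the edge has sign `+1`). -/
def doubleCover (G : SimpleGraph V) (φ : V → V → Prop) : SimpleGraph (V × Bool) :=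
  SimpleGraph.fromRel fun x y => G.Adj x.1 y.1 ∧ (x.2 = y.2 ↔ φ x.1 y.1)

/-- The quotient graph `G/P` of a partition of the vertices given by the fibers of `c`. -/
def quotientGraph (G : SimpleGraph V) {ι : Type*} (c : V → ι) : SimpleGraph ι :=
  SimpleGraph.fromRel fun i j => ∃ u v : V, c u = i ∧ c v = j ∧ G.Adj u v

/-- The spanning subgraph of `G` consisting of the edges lying inside a single part of the
partition given by the fibers of `c` (the disjoint union of the induced subgraphs on parts). -/
def partsSubgraph (G : SimpleGraph V) {ι : Type*} (c : V → ι) : SimpleGraph V :=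
  SimpleGraph.fromRel fun u v => G.Adj u v ∧ c u = c v

lemma doubleCover_adj {G : SimpleGraph V} {φ : V → V → Prop} (hφ : Std.Symm φ)
    {x y : V × Bool} :
    (doubleCover G φ).Adj x y ↔ G.Adj x.1 y.1 ∧ (x.2 = y.2 ↔ φ x.1 y.1) := by
  have hsymm : G.Adj y.1 x.1 ∧ (y.2 = x.2 ↔ φ y.1 x.1) →
      G.Adj x.1 y.1 ∧ (x.2 = y.2 ↔ φ x.1 y.1) :=
    fun ⟨hG, hsign⟩ =>
      ⟨hG.symm, eq_comm.trans (hsign.trans ⟨hφ.symm _ _, hφ.symm _ _⟩)⟩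
  rw [doubleCover, fromRel_adj]
  exact ⟨fun ⟨_, h⟩ => h.elim id hsymm,
    fun h => ⟨fun hxy => G.irrefl (hxy ▸ h.1), Or.inl h⟩⟩

lemma colorable_iff_exists_isProperColoring_lt {W : Type*} (G : SimpleGraph W) (n : ℕ) :
    G.Colorable n ↔ ∃ c : W → ℕ, (∀ w, c w < n) ∧ IsProperColoring G c := by
  rw [colorable_iff_exists_bdd_nat_coloring]
  exact ⟨fun ⟨C, hC⟩ => ⟨C, hC, fun _ _ h => C.valid h⟩,
    fun ⟨c, hc, hproper⟩ => ⟨Coloring.mk c (hproper _ _), hc⟩⟩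

/-- Edges of `H` stay inside a sheet of the double cover and the other edges of `G` cross between
the sheets, so the colorings of the two sheets form a compatible pair. -/
lemma compatiblePair_iff_isProperColoring_doubleCover {G H : SimpleGraph V} (hH : H ≤ G)
    (c : V × Bool → ℕ) :
    CompatiblePair G H (fun v => c (v, true)) (fun v => c (v, false)) ↔
      IsProperColoring (doubleCover G fun u v => H.Adj u v) c := by
  have hadj {x y : V × Bool} := doubleCover_adj (G := G) (x := x) (y := y) H.symm
  constructor
  · rintro ⟨hf, hg, hfg⟩ ⟨u, a⟩ ⟨v, b⟩ huv
    obtain ⟨hG, hsign⟩ := hadj.1 huv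
    cases a <;> cases b <;> simp only [Bool.false_eq_true, Bool.true_eq_false, false_iff,
      true_iff] at hsign
    · exact hg u v hsign
    · exact (hfg v u hG.symm fun h => hsign h.symm).symm
    · exact hfg u v hG hsign
    · exact hf u v hsign
  · intro hc
    exact ⟨fun u v h => hc _ _ (hadj.2 ⟨hH h, by simpa⟩),
      fun u v h => hc _ _ (hadj.2 ⟨hH h, by simpa⟩),
      fun u v hG hnH => hc _ _ (hadj.2 ⟨hG, by simpa⟩)⟩

theorem chromatic_relative_eq_doubleCover_general (G H : SimpleGraph V) (hH : H ≤ G) :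
    relChrom G H = chrom (doubleCover G fun u v => H.Adj u v) := by
  have hsets (n : ℕ) :
      (∃ f g : V → ℕ, (∀ v, f v < n) ∧ (∀ v, g v < n) ∧ CompatiblePair G H f g) ↔
        (doubleCover G fun u v => H.Adj u v).Colorable n := by
    rw [colorable_iff_exists_isProperColoring_lt]
    constructor
    · rintro ⟨f, g, hf, hg, hfg⟩
      refine ⟨fun x => cond x.2 (f x.1) (g x.1), fun ⟨v, b⟩ => ?_,
        (compatiblePair_iff_isProperColoring_doubleCover hH _).1 hfg⟩
      cases b
      exacts [hg v, hf v]
    · rintro ⟨c, hc, hproper⟩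
      exact ⟨_, _, fun v => hc _, fun v => hc _,
        (compatiblePair_iff_isProperColoring_doubleCover hH c).2 hproper⟩
  simp only [relChrom, chrom, hsets]

/-- The chromatic number of a spanning subgraph `H` with respect to `G` equals the chromatic
number of the double covering of `G` determined by the signing with co-support `H`. -/
theorem chromatic_relative_eq_doubleCover [Fintype V] (G H : SimpleGraph V) (hH : H ≤ G) :
    relChrom G H = chrom (doubleCover G fun u v => H.Adj u v) :=
  chromatic_relative_eq_doubleCover_general G H hH
end

section
/- If two spanning subgraphs H and K of a graph G are Seidel switching equivalent, then χ_G(H) = χ_G(K). -/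
open SimpleGraph

attribute [local instance] Classical.propDecidable

variable {V : Type*}

lemma seidelSwitch_adj (G H : SimpleGraph V) (X : Set V) (u v : V) :
    (seidelSwitch G H X).Adj u v ↔
      ((u ∈ X ↔ v ∈ X) ∧ H.Adj u v) ∨ (¬(u ∈ X ↔ v ∈ X) ∧ G.Adj u v ∧ ¬ H.Adj u v) := by
  simp only [seidelSwitch, SimpleGraph.fromRel_adj]
  constructor
  · rintro ⟨hne, h | h⟩
    · exact h
    · rcases h with ⟨h1, h2⟩ | ⟨h1, h2, h3⟩
      · exact Or.inl ⟨Iff.comm.mp h1, h2.symm⟩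
      · exact Or.inr ⟨fun hc => h1 (Iff.comm.mp hc), h2.symm, fun hc => h3 hc.symm⟩
  · intro h
    refine ⟨?_, Or.inl h⟩
    rcases h with ⟨_, h2⟩ | ⟨_, h2, _⟩
    · exact h2.ne
    · exact h2.ne

lemma seidelSwitch_involutive (G H : SimpleGraph V) (hH : H ≤ G) (X : Set V) :
    seidelSwitch G (seidelSwitch G H X) X = H := by
  ext u v
  simp only [seidelSwitch_adj]
  constructor
  · rintro (⟨h1, h⟩ | ⟨h1, h2, h3⟩)
    · rcases h with ⟨_, h⟩ | ⟨hc, _⟩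
      · exact h
      · exact absurd h1 hc
    · by_contra hne
      exact h3 (Or.inr ⟨h1, h2, hne⟩)
  · intro hadj
    by_cases hX : u ∈ X ↔ v ∈ X
    · exact Or.inl ⟨hX, Or.inl ⟨hX, hadj⟩⟩
    · refine Or.inr ⟨hX, hH hadj, ?_⟩
      rintro (⟨h1, _⟩ | ⟨_, _, h3⟩)
      · exact hX h1
      · exact h3 hadj

lemma proper_switch (G H : SimpleGraph V) (X : Set V) {f g : V → ℕ}
    (hf : IsProperColoring H f) (hg : IsProperColoring H g)
    (hfg : ∀ u v, G.Adj u v → ¬ H.Adj u v → f u ≠ g v)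
    (hgf : ∀ u v, G.Adj u v → ¬ H.Adj u v → g u ≠ f v) :
    IsProperColoring (seidelSwitch G H X) (fun u => if u ∈ X then g u else f u) := by
  intro u v hadj
  rw [seidelSwitch_adj] at hadj
  by_cases hu : u ∈ X <;> by_cases hv : v ∈ X <;>
    simp only [hu, hv, if_pos, if_neg, not_false_iff]
  · rcases hadj with ⟨_, h2⟩ | ⟨h1, _, _⟩
    · exact hg u v h2
    · exact absurd (iff_of_true hu hv) h1
  · rcases hadj with ⟨h1, _⟩ | ⟨_, h2, h3⟩
    · exact absurd (h1.mp hu) hv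
    · exact hgf u v h2 h3
  · rcases hadj with ⟨h1, _⟩ | ⟨_, h2, h3⟩
    · exact absurd (h1.mpr hv) hu
    · exact hfg u v h2 h3
  · rcases hadj with ⟨_, h2⟩ | ⟨h1, _, _⟩
    · exact hf u v h2
    · exact absurd (iff_of_false hu hv) h1

lemma compat_switch (G H : SimpleGraph V) (X : Set V) {f g : V → ℕ}
    (hc : CompatiblePair G H f g) :
    CompatiblePair G (seidelSwitch G H X)
      (fun u => if u ∈ X then g u else f u) (fun u => if u ∈ X then f u else g u) := by
  obtain ⟨hf, hg, hfg⟩ := hc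
  have hgf : ∀ u v, G.Adj u v → ¬ H.Adj u v → g u ≠ f v := by
    intro u v h1 h2 he
    exact hfg v u h1.symm (fun hc => h2 hc.symm) he.symm
  refine ⟨proper_switch G H X hf hg hfg hgf, proper_switch G H X hg hf hgf hfg, ?_⟩
  intro u v hG hK
  rw [seidelSwitch_adj] at hK
  have hKA : ¬((u ∈ X ↔ v ∈ X) ∧ H.Adj u v) := fun a => hK (Or.inl a)
  have hKB : ¬(¬(u ∈ X ↔ v ∈ X) ∧ G.Adj u v ∧ ¬ H.Adj u v) := fun b => hK (Or.inr b)
  by_cases hu : u ∈ X <;> by_cases hv : v ∈ X <;>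
    simp only [hu, hv, if_pos, if_neg, not_false_iff]
  · have hH' : ¬ H.Adj u v := fun hh => hKA ⟨iff_of_true hu hv, hh⟩
    exact hgf u v hG hH'
  · have hH' : H.Adj u v := by
      by_contra hh
      exact hKB ⟨fun hc => hv (hc.mp hu), hG, hh⟩
    exact hg u v hH'
  · have hH' : H.Adj u v := by
      by_contra hh
      exact hKB ⟨fun hc => hu (hc.mpr hv), hG, hh⟩
    exact hf u v hH'
  · have hH' : ¬ H.Adj u v := fun hh => hKA ⟨iff_of_false hu hv, hh⟩
    exact hfg u v hG hH'

lemma switch_set_subset (G H : SimpleGraph V) (X : Set V) :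
    {n | ∃ f g : V → ℕ, (∀ v, f v < n) ∧ (∀ v, g v < n) ∧ CompatiblePair G H f g} ⊆
    {n | ∃ f g : V → ℕ, (∀ v, f v < n) ∧ (∀ v, g v < n) ∧
      CompatiblePair G (seidelSwitch G H X) f g} := by
  rintro n ⟨f, g, hf, hg, hc⟩
  refine ⟨_, _, fun v => ?_, fun v => ?_, compat_switch G H X hc⟩ <;>
    · by_cases hv : v ∈ X <;> simp only [hv, if_pos, if_neg, not_false_iff] <;>
        first | exact hf v | exact hg v

theorem relChrom_eq_of_seidel_equiv [Fintype V] (G H K : SimpleGraph V)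
    (hH : H ≤ G) (hK : K ≤ G) (h : ∃ X : Set V, seidelSwitch G H X = K) :
    relChrom G H = relChrom G K := by
  obtain ⟨X, rfl⟩ := h
  unfold relChrom
  congr 1
  apply Set.Subset.antisymm (switch_set_subset G H X)
  have := switch_set_subset G (seidelSwitch G H X) X
  rwa [seidelSwitch_involutive G H hH X] at this
end

section
/- Let G be a connected graph and H a spanning subgraph of G. Then χ(K) ≤ χ_G(H) for every spanning subgraph K of G that is Seidel switching equivalent to H; in particular χ(H) ≤ χ_G(H). -/
open SimpleGraph

attribute [local instance] Classical.propDecidable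

variable {V : Type*}

lemma seidelSwitch_colorable {V : Type*} (G H : SimpleGraph V) (X : Set V) (n : ℕ)
    (f g : V → ℕ) (hf : ∀ v, f v < n) (hg : ∀ v, g v < n)
    (hc : CompatiblePair G H f g) : (seidelSwitch G H X).Colorable n := by
  classical
  obtain ⟨h1, h2, h3⟩ := hc
  refine ⟨SimpleGraph.Coloring.mk
    (fun v => if v ∈ X then (⟨g v, hg v⟩ : Fin n) else ⟨f v, hf v⟩) ?_⟩
  intro u v huv
  rw [seidelSwitch, SimpleGraph.fromRel_adj] at huv
  obtain ⟨hne, h⟩ := huv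
  have key : ∀ a b : V, (((a ∈ X ↔ b ∈ X) ∧ H.Adj a b) ∨
      (¬(a ∈ X ↔ b ∈ X) ∧ G.Adj a b ∧ ¬ H.Adj a b)) →
      (if a ∈ X then (⟨g a, hg a⟩ : Fin n) else ⟨f a, hf a⟩) ≠
      (if b ∈ X then (⟨g b, hg b⟩ : Fin n) else ⟨f b, hf b⟩) := by
    intro a b hab
    rcases hab with ⟨hiff, hH⟩ | ⟨hniff, hGab, hnH⟩
    · by_cases ha : a ∈ X
      · have hb : b ∈ X := hiff.mp ha
        simp only [ha, hb, if_pos]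
        exact fun e => h2 a b hH (congrArg Fin.val e)
      · have hb : b ∉ X := fun hb => ha (hiff.mpr hb)
        simp only [ha, hb, if_neg, not_false_iff]
        exact fun e => h1 a b hH (congrArg Fin.val e)
    · by_cases ha : a ∈ X
      · have hb : b ∉ X := fun hb => hniff ⟨fun _ => hb, fun _ => ha⟩
        simp only [ha, hb, if_pos, if_neg, not_false_iff]
        intro e
        exact h3 b a hGab.symm (fun h => hnH h.symm) (congrArg Fin.val e).symm
      · have hb : b ∈ X := by
          by_contra hb
          exact hniff ⟨fun h => absurd h ha, fun h => absurd h hb⟩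
        simp only [ha, hb, if_pos, if_neg, not_false_iff]
        intro e
        exact h3 a b hGab hnH (congrArg Fin.val e)
  rcases h with h | h
  · exact key u v h
  · exact fun e => key v u h e.symm

lemma seidelSwitch_empty {V : Type*} (G H : SimpleGraph V) (hH : H ≤ G) :
    seidelSwitch G H (∅ : Set V) = H := by
  ext u v
  rw [seidelSwitch, SimpleGraph.fromRel_adj]
  constructor
  · rintro ⟨hne, (⟨_, h⟩ | ⟨hn, _⟩) | (⟨_, h⟩ | ⟨hn, _⟩)⟩
    · exact h
    · exact absurd Iff.rfl hn
    · exact h.symm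
    · exact absurd Iff.rfl hn
  · intro h
    exact ⟨h.ne, Or.inl (Or.inl ⟨Iff.rfl, h⟩)⟩

theorem chrom_le_relChrom_of_switch_equiv [Fintype V] (G H : SimpleGraph V)
    (hG : G.Connected) (hH : H ≤ G) :
    (∀ K : SimpleGraph V, (∃ X : Set V, seidelSwitch G H X = K) →
      chrom K ≤ relChrom G H) ∧ chrom H ≤ relChrom G H := by
  classical
  have hS : Fintype.card V ∈
      {n | ∃ f g : V → ℕ, (∀ v, f v < n) ∧ (∀ v, g v < n) ∧ CompatiblePair G H f g} := by
    set e := Fintype.equivFin V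
    refine ⟨fun v => (e v : ℕ), fun v => (e v : ℕ), fun v => (e v).isLt,
      fun v => (e v).isLt, ?_, ?_, ?_⟩
    · intro u v h hv
      exact h.ne (e.injective (Fin.ext hv))
    · intro u v h hv
      exact h.ne (e.injective (Fin.ext hv))
    · intro u v h _ hv
      exact h.ne (e.injective (Fin.ext hv))
  have hmem := Nat.sInf_mem ⟨_, hS⟩
  obtain ⟨f, g, hf, hg, hc⟩ := hmem
  have main : ∀ K : SimpleGraph V, (∃ X : Set V, seidelSwitch G H X = K) →
      chrom K ≤ relChrom G H := by
    rintro K ⟨X, rfl⟩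
    exact Nat.sInf_le (seidelSwitch_colorable G H X _ f g hf hg hc)
  refine ⟨main, ?_⟩
  have := main H ⟨∅, seidelSwitch_empty G H hH⟩
  exact this
end

section
/- Let G be a connected graph, H a spanning subgraph of G, and f a proper χ(H)-coloring of H. Let I_f be the number of colors i such that f^{-1}(i) is an independent set in G. Then χ_G(H) ≤ 2χ(H) - I_f. -/
open SimpleGraph

attribute [local instance] Classical.propDecidable

variable {V : Type*}

/-- For a proper `χ(H)`-coloring `f` of `H`, letting `I_f` be the number of colors whose
color class is independent in `G`, we have `χ_G(H) ≤ 2χ(H) - I_f`. -/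
theorem relChrom_le_two_chrom_sub [Fintype V] (G H : SimpleGraph V)
    (hG : G.Connected) (hH : H ≤ G) (f : V → ℕ)
    (hf : IsProperColoring H f) (hlt : ∀ v, f v < chrom H) :
    relChrom G H ≤ 2 * chrom H -
      ((Finset.range (chrom H)).filter
        (fun i => ∀ u v : V, f u = i → f v = i → ¬ G.Adj u v)).card := by

  classical
  set k := chrom H with hk
  set S := (Finset.range k).filter
      (fun i => ∀ u v : V, f u = i → f v = i → ¬ G.Adj u v) with hS
  set N := (Finset.range k) \ S with hN
  have hIk : S.card ≤ k := by
    calc S.card ≤ (Finset.range k).card := Finset.card_filter_le _ _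
    _ = k := Finset.card_range k
  have hNcard : N.card = k - S.card := by
    rw [hN, Finset.card_sdiff_of_subset (Finset.filter_subset _ _), Finset.card_range]
  set g : V → ℕ := fun v => if f v ∈ S then f v else k + (N.filter (· < f v)).card
    with hgdef
  have hmemN : ∀ v, f v ∉ S → f v ∈ N := by
    intro v hv
    rw [hN, Finset.mem_sdiff]
    exact ⟨Finset.mem_range.mpr (hlt v), hv⟩
  have key : ∀ a b : V, f a ∉ S → f a < f b →
      (N.filter (· < f a)).card < (N.filter (· < f b)).card := by
    intro a b ha hab
    apply Finset.card_lt_card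
    have hsub : N.filter (· < f a) ⊆ N.filter (· < f b) := by
      intro x hx
      rw [Finset.mem_filter] at hx ⊢
      exact ⟨hx.1, lt_trans hx.2 hab⟩
    rw [Finset.ssubset_iff_of_subset hsub]
    exact ⟨f a, Finset.mem_filter.mpr ⟨hmemN a ha, hab⟩,
      fun h => lt_irrefl _ (Finset.mem_filter.mp h).2⟩
  apply Nat.sInf_le
  refine ⟨f, g, fun v => by have := hlt v; omega, ?_, hf, ?_, ?_⟩
  · intro v
    by_cases hv : f v ∈ S
    · simp only [hgdef, if_pos hv]
      have := hlt v; omega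
    · simp only [hgdef, if_neg hv]
      have h1 : (N.filter (· < f v)).card < N.card := by
        apply Finset.card_lt_card
        rw [Finset.ssubset_iff_of_subset (Finset.filter_subset _ _)]
        exact ⟨f v, hmemN v hv, fun h => lt_irrefl _ (Finset.mem_filter.mp h).2⟩
      omega
  · intro u v huv
    have hne := hf u v huv
    by_cases hu : f u ∈ S <;> by_cases hv : f v ∈ S <;>
      simp only [hgdef, if_pos, if_neg, hu, hv, if_true, if_false]
    · exact hne
    · have := Finset.mem_range.mp (Finset.mem_filter.mp hu).1; omega
    · have := Finset.mem_range.mp (Finset.mem_filter.mp hv).1; omega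
    · rcases lt_or_gt_of_ne hne with h | h
      · have := key u v hu h; omega
      · have := key v u hv h; omega
  · intro u v hG' hH' heq
    by_cases hv : f v ∈ S
    · simp only [hgdef, if_pos hv] at heq
      have := (Finset.mem_filter.mp hv).2 u v (heq.trans rfl) rfl
      exact this hG'
    · simp only [hgdef, if_neg hv] at heq
      have := hlt u; omega
end

section
/- Let G be a connected graph with at least one edge and H a spanning subgraph of G. Then χ_G(H) = 2 if and only if G is bipartite or H is Seidel switching equivalent in G to the edgeless spanning subgraph of G. -/
open SimpleGraph

attribute [local instance] Classical.propDecidable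

variable {V : Type*}

/-- `χ_G(H) = 2` iff `G` is bipartite or `H` is Seidel switching equivalent to the
edgeless spanning subgraph. -/
theorem relChrom_eq_two_iff [Fintype V] (G H : SimpleGraph V)
    (hG : G.Connected) (he : ∃ u v, G.Adj u v) (hH : H ≤ G) :
    relChrom G H = 2 ↔
      (G.Colorable 2 ∨ ∃ X : Set V, seidelSwitch G H X = (⊥ : SimpleGraph V)) := by
    classical
  obtain ⟨u0, v0, huv0⟩ := he
  have hmem_iff : relChrom G H = 2 ↔
      2 ∈ {n | ∃ f g : V → ℕ, (∀ v, f v < n) ∧ (∀ v, g v < n) ∧ CompatiblePair G H f g} := by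
    have hlb : ∀ n ∈ {n | ∃ f g : V → ℕ, (∀ v, f v < n) ∧ (∀ v, g v < n) ∧
        CompatiblePair G H f g}, 2 ≤ n := by
      rintro n ⟨f, g, hf, hg, hfp, hgp, hc⟩
      by_contra hlt
      push_neg at hlt
      have hfu := hf u0; have hgv := hg v0; have hfv := hf v0
      by_cases hH' : H.Adj u0 v0
      · exact hfp u0 v0 hH' (by omega)
      · exact hc u0 v0 huv0 hH' (by omega)
    constructor
    · intro h2
      have hne : {n | ∃ f g : V → ℕ, (∀ v, f v < n) ∧ (∀ v, g v < n) ∧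
          CompatiblePair G H f g}.Nonempty := by
        by_contra hemp
        rw [Set.not_nonempty_iff_eq_empty] at hemp
        rw [relChrom, hemp, Nat.sInf_empty] at h2
        omega
      have := Nat.sInf_mem hne
      rwa [show sInf {n | ∃ f g : V → ℕ, (∀ v, f v < n) ∧ (∀ v, g v < n) ∧
        CompatiblePair G H f g} = 2 from h2] at this
    · intro h2
      exact le_antisymm (Nat.sInf_le h2) (hlb _ (Nat.sInf_mem ⟨2, h2⟩))
  rw [hmem_iff]
  constructor
  · rintro ⟨f, g, hf, hg, hfp, hgp, hc⟩
    have key : ∀ u v, G.Adj u v → ((f u = g u) ↔ (f v = g v)) := by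
      intro u v huv
      have hfu := hf u; have hfv := hf v; have hgu := hg u; have hgv := hg v
      by_cases hH' : H.Adj u v
      · have h1 := hfp u v hH'
        have h2 := hgp u v hH'
        omega
      · have h1 := hc u v huv hH'
        have h2 := hc v u huv.symm (fun h => hH' h.symm)
        omega
    have const : ∀ (u v : V) (_ : G.Walk u v), f u = g u → f v = g v := by
      intro u v w
      induction w with
      | nil => exact id
      | cons h' p ih => exact fun h => ih ((key _ _ h').mp h)
    by_cases hA : f u0 = g u0
    · left
      refine ⟨SimpleGraph.Coloring.mk (fun v => ⟨f v, hf v⟩) ?_⟩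
      intro a b hab hEq
      have hfab : f a = f b := by simpa [Fin.ext_iff] using hEq
      have hAb : f b = g b := const u0 b (hG.preconnected u0 b).some hA
      by_cases hH' : H.Adj a b
      · exact hfp a b hH' hfab
      · exact hc a b hab hH' (by omega)
    · right
      refine ⟨{v | f v = 0}, ?_⟩
      have hB : ∀ v, f v ≠ g v := by
        intro v hv
        exact hA (const v u0 (hG.preconnected v u0).some hv)
      ext a b
      simp only [seidelSwitch, SimpleGraph.fromRel_adj, SimpleGraph.bot_adj, iff_false,
        Set.mem_setOf_eq]
      rintro ⟨hne, hr⟩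
      have hfa := hf a; have hfb := hf b; have hga := hg a; have hgb := hg b
      have hBa := hB a; have hBb := hB b
      rcases hr with (⟨hiff, hadj⟩ | ⟨hniff, hadj, hnadj⟩) |
        (⟨hiff, hadj⟩ | ⟨hniff, hadj, hnadj⟩)
      · have h1 := hfp a b hadj; omega
      · have h1 := hc a b hadj hnadj
        have h2 := hc b a hadj.symm (fun h => hnadj h.symm)
        omega
      · have h1 := hfp b a hadj; omega
      · have h1 := hc b a hadj hnadj
        have h2 := hc a b hadj.symm (fun h => hnadj h.symm)
        omega
  · rintro (hcol | ⟨X, hX⟩)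
    · obtain ⟨C⟩ := hcol
      refine ⟨fun v => (C v).val, fun v => (C v).val, fun v => (C v).isLt,
        fun v => (C v).isLt, ?_, ?_, ?_⟩
      · exact fun a b h hEq => C.valid (hH h) (Fin.ext hEq)
      · exact fun a b h hEq => C.valid (hH h) (Fin.ext hEq)
      · exact fun a b h _ hEq => C.valid h (Fin.ext hEq)
    · have hr : ∀ a b, a ≠ b →
          ¬(((a ∈ X ↔ b ∈ X) ∧ H.Adj a b) ∨
            (¬(a ∈ X ↔ b ∈ X) ∧ G.Adj a b ∧ ¬H.Adj a b)) := by
        intro a b hab h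
        have hadj : (seidelSwitch G H X).Adj a b := by
          rw [seidelSwitch, SimpleGraph.fromRel_adj]
          exact ⟨hab, Or.inl h⟩
        rw [hX] at hadj
        exact hadj
      refine ⟨fun v => if v ∈ X then 0 else 1, fun v => if v ∈ X then 1 else 0,
        ?_, ?_, ?_, ?_, ?_⟩
      · intro v; by_cases hv : v ∈ X <;> simp [hv]
      · intro v; by_cases hv : v ∈ X <;> simp [hv]
      · intro a b hadj
        have h2 : ¬(a ∈ X ↔ b ∈ X) := fun hiff => hr a b hadj.ne (Or.inl ⟨hiff, hadj⟩)
        by_cases ha : a ∈ X <;> by_cases hb : b ∈ X <;> simp [ha, hb] at h2 ⊢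
      · intro a b hadj
        have h2 : ¬(a ∈ X ↔ b ∈ X) := fun hiff => hr a b hadj.ne (Or.inl ⟨hiff, hadj⟩)
        by_cases ha : a ∈ X <;> by_cases hb : b ∈ X <;> simp [ha, hb] at h2 ⊢
      · intro a b hadj hnadj
        have h2 : a ∈ X ↔ b ∈ X := by
          by_contra h
          exact hr a b hadj.ne (Or.inr ⟨h, hadj, hnadj⟩)
        by_cases ha : a ∈ X <;> by_cases hb : b ∈ X <;> simp [ha, hb] at h2 ⊢
end

section
/- If G is a bipartite graph with at least one edge, then χ_G(H) = 2 for every spanning subgraph H of G. -/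
open SimpleGraph

attribute [local instance] Classical.propDecidable

variable {V : Type*}

theorem relChrom_eq_two_of_bipartite [Fintype V] (G : SimpleGraph V)
    (hbip : G.Colorable 2) (he : ∃ u v, G.Adj u v)
    (H : SimpleGraph V) (hH : H ≤ G) :
    relChrom G H = 2 := by
  obtain ⟨C⟩ := hbip
  have hmem : 2 ∈ {n | ∃ f g : V → ℕ, (∀ v, f v < n) ∧ (∀ v, g v < n) ∧
      CompatiblePair G H f g} := by
    refine ⟨fun v => (C v : ℕ), fun v => (C v : ℕ), fun v => (C v).isLt,
      fun v => (C v).isLt, ?_, ?_, ?_⟩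
    · intro u v huv h
      exact C.valid (hH huv) (Fin.val_injective h)
    · intro u v huv h
      exact C.valid (hH huv) (Fin.val_injective h)
    · intro u v huv _ h
      exact C.valid huv (Fin.val_injective h)
  refine le_antisymm (Nat.sInf_le hmem) (le_csInf ⟨2, hmem⟩ ?_)
  rintro n ⟨f, g, hf, hg, hfp, hgp, hcomp⟩
  obtain ⟨u, v, huv⟩ := he
  by_contra hn
  push_neg at hn
  interval_cases n
  · exact absurd (hf u) (by omega)
  · have h1 := hf u
    have h2 := hg v
    have h3 := hf v
    by_cases hHuv : H.Adj u v
    · exact hfp u v hHuv (by omega)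
    · exact hcomp u v huv hHuv (by omega)
end

section
/- Let P = {V_1, ..., V_k} be a partition of the vertex set of a connected graph G such that the quotient graph G/P is bipartite, and let H be the disjoint union of the induced subgraphs G[V_1], ..., G[V_k] (as a spanning subgraph of G). Then χ_G(H) = χ(G). -/
open SimpleGraph

attribute [local instance] Classical.propDecidable

variable {V : Type*}

lemma partsSubgraph_adj (G : SimpleGraph V) {ι : Type*} (c : V → ι) {u v : V} :
    (partsSubgraph G c).Adj u v ↔ G.Adj u v ∧ c u = c v := by
  simp only [partsSubgraph, fromRel_adj]
  constructor
  · rintro ⟨hne, h | h⟩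
    · exact h
    · exact ⟨h.1.symm, h.2.symm⟩
  · rintro ⟨h, he⟩
    exact ⟨G.ne_of_adj h, Or.inl ⟨h, he⟩⟩

/-- If the quotient of `G` by a partition is bipartite, then the chromatic number of the
union of induced subgraphs on the parts with respect to `G` is `χ(G)`. -/
theorem relChrom_partsSubgraph_of_bipartite_quotient [Fintype V] {ι : Type*}
    (G : SimpleGraph V) (hG : G.Connected) (c : V → ι)
    (hbip : (quotientGraph G c).Colorable 2) :
    relChrom G (partsSubgraph G c) = chrom G := by
  classical
  obtain ⟨b⟩ := hbip
  have fin2 : ∀ x : Fin 2, x = 0 ∨ x = 1 := by decide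
  have key : {n | ∃ f g : V → ℕ, (∀ v, f v < n) ∧ (∀ v, g v < n) ∧
      CompatiblePair G (partsSubgraph G c) f g} = {n | G.Colorable n} := by
    ext n
    simp only [Set.mem_setOf_eq]
    constructor
    · rintro ⟨f, g, hf, hg, hfP, hgP, hcomp⟩
      rw [SimpleGraph.colorable_iff_exists_bdd_nat_coloring]
      refine ⟨SimpleGraph.Coloring.mk (fun v => if b (c v) = 0 then f v else g v) ?_, ?_⟩
      · intro u v huv
        by_cases hcc : c u = c v
        · have hH : (partsSubgraph G c).Adj u v := (partsSubgraph_adj G c).2 ⟨huv, hcc⟩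
          simp only [hcc]
          split_ifs
          · exact hfP u v hH
          · exact hgP u v hH
        · have hQ : (quotientGraph G c).Adj (c u) (c v) := by
            simp only [quotientGraph, fromRel_adj]
            exact ⟨hcc, Or.inl ⟨u, v, rfl, rfl, huv⟩⟩
          have hb := b.valid hQ
          have hH : ¬ (partsSubgraph G c).Adj u v :=
            fun h => hcc ((partsSubgraph_adj G c).1 h).2
          have hH' : ¬ (partsSubgraph G c).Adj v u := fun h => hH h.symm
          by_cases h0 : b (c u) = 0
          · have h1 : b (c v) ≠ 0 := fun h => hb (h0.trans h.symm)
            simp only [if_pos h0, if_neg h1]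
            exact hcomp u v huv hH
          · have h1 : b (c v) = 0 := by
              rcases fin2 (b (c v)) with h | h
              · exact h
              · rcases fin2 (b (c u)) with h' | h'
                · exact absurd h' h0
                · exact absurd (h'.trans h.symm) hb
            simp only [if_neg h0, if_pos h1]
            exact fun h => hcomp v u huv.symm hH' h.symm
      · intro v
        show (if b (c v) = 0 then f v else g v) < n
        split_ifs
        · exact hf v
        · exact hg v
    · intro hcol
      rw [SimpleGraph.colorable_iff_exists_bdd_nat_coloring] at hcol
      obtain ⟨C, hC⟩ := hcol
      refine ⟨C, C, hC, hC, ?_, ?_, ?_⟩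
      · exact fun u v h => C.valid ((partsSubgraph_adj G c).1 h).1
      · exact fun u v h => C.valid ((partsSubgraph_adj G c).1 h).1
      · exact fun u v h _ => C.valid h
  unfold relChrom chrom
  rw [key]
end

section
/- Let 2 ≤ m ≤ n, and let H_m be the spanning subgraph of the complete graph K_n consisting of a complete graph on m-1 of the vertices together with n-m+1 isolated vertices. Then χ_{K_n}(H_m) = m. -/
open SimpleGraph

attribute [local instance] Classical.propDecidable

variable {V : Type*}

/-- For `2 ≤ m ≤ n`, the spanning subgraph of `K_n` consisting of `K_{m-1}` together with
`n-m+1` isolated vertices has chromatic number `m` with respect to `K_n`. -/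
theorem relChrom_clique_plus_isolated (n m : ℕ) (h2 : 2 ≤ m) (hmn : m ≤ n) :
    relChrom (⊤ : SimpleGraph (Fin n))
      (SimpleGraph.fromRel fun u v : Fin n => u.val < m - 1 ∧ v.val < m - 1) = m := by
  set H := SimpleGraph.fromRel fun u v : Fin n => u.val < m - 1 ∧ v.val < m - 1 with hH
  have hAdj : ∀ u v : Fin n, H.Adj u v ↔ u ≠ v ∧ (u.val < m - 1 ∧ v.val < m - 1) := by
    intro u v
    rw [hH, SimpleGraph.fromRel_adj]
    tauto
  have hmem : m ∈ {k | ∃ f g : Fin n → ℕ, (∀ v, f v < k) ∧ (∀ v, g v < k) ∧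
      CompatiblePair (⊤ : SimpleGraph (Fin n)) H f g} := by
    refine ⟨fun v => if v.val < m - 1 then v.val else 0,
            fun v => if v.val < m - 1 then v.val + 1 else m - 1, ?_, ?_, ?_, ?_, ?_⟩
    · intro v; by_cases hv : v.val < m - 1 <;> simp [hv] <;> omega
    · intro v; by_cases hv : v.val < m - 1 <;> simp [hv] <;> omega
    · intro u v huv
      rw [hAdj] at huv
      obtain ⟨hne, hu, hv⟩ := huv
      have : u.val ≠ v.val := fun h => hne (Fin.ext h)
      simp [hu, hv, this]
    · intro u v huv
      rw [hAdj] at huv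
      obtain ⟨hne, hu, hv⟩ := huv
      have : u.val ≠ v.val := fun h => hne (Fin.ext h)
      simp [hu, hv]; omega
    · intro u v hadj hnadj
      rw [hAdj] at hnadj
      have hne : u ≠ v := hadj.ne
      push_neg at hnadj
      by_cases hu : u.val < m - 1
      · have hv : ¬ v.val < m - 1 := by have := hnadj hne hu; omega
        simp [hu, hv]; omega
      · by_cases hv : v.val < m - 1 <;> simp [hu, hv] <;> omega
  refine le_antisymm (Nat.sInf_le hmem) (le_csInf ⟨m, hmem⟩ ?_)
  rintro k ⟨f, g, hf, hg, hpf, hpg, hc⟩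
  by_contra hlt
  push_neg at hlt
  -- f is injective on the clique, so m - 1 ≤ k
  have hmn' : m - 1 < n := by omega
  set F : Fin (m - 1) → Fin k := fun i => ⟨f ⟨i.val, by omega⟩, hf _⟩ with hF
  have hFinj : Function.Injective F := by
    intro i j hij
    by_contra hne
    have hvne : (⟨i.val, by omega⟩ : Fin n) ≠ ⟨j.val, by omega⟩ := by
      intro h
      exact hne (Fin.ext (by simpa using congrArg Fin.val h))
    have hadj : H.Adj ⟨i.val, by omega⟩ ⟨j.val, by omega⟩ :=
      (hAdj _ _).2 ⟨hvne, i.isLt, j.isLt⟩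
    exact hpf _ _ hadj (by simpa using congrArg Fin.val hij)
  have hcard : m - 1 ≤ k := by
    simpa using Fintype.card_le_of_injective F hFinj
  have hk : k = m - 1 := by omega
  have hFbij : Function.Bijective F :=
    (Fintype.bijective_iff_injective_and_card F).2 ⟨hFinj, by simp [hk]⟩
  set w : Fin n := ⟨m - 1, hmn'⟩ with hw
  obtain ⟨i, hi⟩ := hFbij.2 ⟨g w, hg w⟩
  set u : Fin n := ⟨i.val, by omega⟩ with hu
  have hfu : f u = g w := by simpa [hF] using congrArg Fin.val hi
  have hune : u ≠ w := by
    intro h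
    have := congrArg Fin.val h
    simp [hu, hw] at this
    omega
  have hadj : (⊤ : SimpleGraph (Fin n)).Adj u w := hune
  have hnadj : ¬ H.Adj u w := by
    rw [hAdj]
    rintro ⟨-, -, hw'⟩
    simp [hw] at hw'
  exact hc u w hadj hnadj hfu
end

section
/- Let H be a spanning subgraph of the complete graph K_n whose connected components are complete graphs K_{ℓ_1}, ..., K_{ℓ_k} with ℓ_1 ≥ ℓ_2 ≥ ... ≥ ℓ_k (k ≥ 2). Then χ_{K_n}(H) = ℓ_1 + ℓ_2. -/
open SimpleGraph

attribute [local instance] Classical.propDecidable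

variable {V : Type*}

/-- If the components of a spanning subgraph `H` of `K_n` are complete graphs
`K_{ℓ_1}, …, K_{ℓ_k}` with `ℓ_1 ≥ ℓ_2 ≥ … ≥ ℓ_k`, then `χ_{K_n}(H) = ℓ_1 + ℓ_2`. -/
theorem relChrom_union_of_cliques [Fintype V] (k : ℕ) (hk : 2 ≤ k)
    (c : V → Fin k) (hsurj : Function.Surjective c)
    (hord : ∀ i j : Fin k, i ≤ j →
      (Finset.univ.filter fun v => c v = j).card ≤ (Finset.univ.filter fun v => c v = i).card) :
    relChrom (⊤ : SimpleGraph V) (SimpleGraph.fromRel fun u v => c u = c v) =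
      (Finset.univ.filter fun v => c v = (⟨0, by omega⟩ : Fin k)).card +
      (Finset.univ.filter fun v => c v = (⟨1, by omega⟩ : Fin k)).card := by
  classical
  set i0 : Fin k := ⟨0, by omega⟩ with hi0
  set i1 : Fin k := ⟨1, by omega⟩ with hi1
  set ℓ : Fin k → ℕ := fun i => (Finset.univ.filter fun v => c v = i).card with hℓ
  set H : SimpleGraph V := SimpleGraph.fromRel fun u v => c u = c v with hH
  have hHadj : ∀ u v, H.Adj u v ↔ u ≠ v ∧ c u = c v := by
    intro u v
    rw [hH, SimpleGraph.fromRel_adj]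
    exact ⟨fun ⟨h1, h2⟩ => ⟨h1, h2.elim id Eq.symm⟩, fun ⟨h1, h2⟩ => ⟨h1, Or.inl h2⟩⟩
  have hle0 : ∀ j : Fin k, ℓ j ≤ ℓ i0 := fun j =>
    hord i0 j (by simp only [Fin.le_def, hi0, Fin.val_mk]; omega)
  have hle1 : ∀ j : Fin k, j ≠ i0 → ℓ j ≤ ℓ i1 := by
    intro j hj
    refine hord i1 j ?_
    rw [Fin.le_def]
    have h0 : j.val ≠ 0 := fun h => hj (Fin.ext h)
    simp only [hi1, Fin.val_mk]
    omega
  -- index within fiber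
  let e : V ≃ Fin (Fintype.card V) := Fintype.equivFin V
  let idx : V → ℕ := fun v => (Finset.univ.filter fun w => c w = c v ∧ e w < e v).card
  have idx_lt : ∀ v, idx v < ℓ (c v) := by
    intro v
    apply Finset.card_lt_card
    rw [Finset.ssubset_iff_of_subset]
    · exact ⟨v, by simp⟩
    · intro w hw
      simp only [Finset.mem_filter, Finset.mem_univ, true_and] at hw ⊢
      exact hw.1
  have idx_mono : ∀ u v, c u = c v → e u < e v → idx u < idx v := by
    intro u v hc huv
    apply Finset.card_lt_card
    rw [Finset.ssubset_iff_of_subset]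
    · refine ⟨u, by simp [hc, huv], by simp⟩
    · intro w hw
      simp only [Finset.mem_filter, Finset.mem_univ, true_and] at hw ⊢
      exact ⟨hw.1.trans hc, hw.2.trans huv⟩
  have idx_inj : ∀ u v, c u = c v → idx u = idx v → u = v := by
    intro u v hc hidx
    by_contra hne
    rcases lt_trichotomy (e u) (e v) with h | h | h
    · exact absurd hidx (Nat.ne_of_lt (idx_mono u v hc h))
    · exact hne (e.injective h)
    · exact absurd hidx.symm (Nat.ne_of_lt (idx_mono v u hc.symm h))
  -- membership: upper bound construction
  have hmem : ℓ i0 + ℓ i1 ∈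
      {n | ∃ f g : V → ℕ, (∀ v, f v < n) ∧ (∀ v, g v < n) ∧
        CompatiblePair (⊤ : SimpleGraph V) H f g} := by
    refine ⟨fun v => idx v + (if c v = i0 then ℓ i1 else ℓ i0), idx, ?_, ?_, ?_, ?_, ?_⟩
    · intro v
      by_cases h : c v = i0
      · have := idx_lt v; rw [h] at this; simp [h]; omega
      · have h1 := idx_lt v
        have h2 := hle1 (c v) h
        simp [h]; omega
    · intro v
      have h1 := idx_lt v
      have := hle0 (c v)
      omega
    · intro u v huv
      rw [hHadj] at huv
      obtain ⟨hne, hc⟩ := huv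
      dsimp only
      rw [hc]
      intro heq
      exact hne (idx_inj u v hc (by omega))
    · intro u v huv
      rw [hHadj] at huv
      obtain ⟨hne, hc⟩ := huv
      exact fun heq => hne (idx_inj u v hc heq)
    · intro u v hGuv hHuv
      rw [hHadj] at hHuv
      rw [SimpleGraph.top_adj] at hGuv
      have hc : c u ≠ c v := fun h => hHuv ⟨hGuv, h⟩
      have hv := idx_lt v
      dsimp only
      by_cases h : c u = i0
      · have hcv : ℓ (c v) ≤ ℓ i1 := hle1 (c v) (fun hv0 => hc (h.trans hv0.symm))
        rw [if_pos h]
        omega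
      · have hcv : ℓ (c v) ≤ ℓ i0 := hle0 (c v)
        rw [if_neg h]
        omega
  -- lower bound
  have hlower : ∀ n ∈ {n | ∃ f g : V → ℕ, (∀ v, f v < n) ∧ (∀ v, g v < n) ∧
      CompatiblePair (⊤ : SimpleGraph V) H f g}, ℓ i0 + ℓ i1 ≤ n := by
    rintro n ⟨f, g, hf, hg, pf, pg, cross⟩
    set A : Finset ℕ := (Finset.univ.filter fun v => c v = i0).image f with hA
    set B : Finset ℕ := (Finset.univ.filter fun v => c v = i1).image g with hB
    have hcardA : A.card = ℓ i0 := by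
      apply Finset.card_image_of_injOn
      intro u hu v hv huv
      simp only [Finset.mem_coe, Finset.mem_filter, Finset.mem_univ, true_and] at hu hv
      by_contra hne
      exact pf u v ((hHadj u v).2 ⟨hne, hu.trans hv.symm⟩) huv
    have hcardB : B.card = ℓ i1 := by
      apply Finset.card_image_of_injOn
      intro u hu v hv huv
      simp only [Finset.mem_coe, Finset.mem_filter, Finset.mem_univ, true_and] at hu hv
      by_contra hne
      exact pg u v ((hHadj u v).2 ⟨hne, hu.trans hv.symm⟩) huv
    have hdisj : Disjoint A B := by
      rw [Finset.disjoint_left]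
      rintro a ha hb
      simp only [hA, hB, Finset.mem_image, Finset.mem_filter, Finset.mem_univ,
        true_and] at ha hb
      obtain ⟨u, hu, hfu⟩ := ha
      obtain ⟨v, hv, hgv⟩ := hb
      have hc : c u ≠ c v := by
        rw [hu, hv]
        intro h
        have := congrArg Fin.val h
        simp [hi0, hi1] at this
      have hne : u ≠ v := fun h => hc (congrArg c h)
      exact cross u v (by rwa [SimpleGraph.top_adj]) (fun h => hc ((hHadj u v).1 h).2)
        (hfu.trans hgv.symm)
    have hsub : A ∪ B ⊆ Finset.range n := by
      intro a ha
      rw [Finset.mem_range]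
      rcases Finset.mem_union.1 ha with h | h <;>
        simp only [hA, hB, Finset.mem_image] at h <;>
        obtain ⟨v, _, hv⟩ := h
      · exact hv ▸ hf v
      · exact hv ▸ hg v
    calc ℓ i0 + ℓ i1 = A.card + B.card := by rw [hcardA, hcardB]
      _ = (A ∪ B).card := (Finset.card_union_of_disjoint hdisj).symm
      _ ≤ (Finset.range n).card := Finset.card_le_card hsub
      _ = n := Finset.card_range n
  exact le_antisymm (Nat.sInf_le hmem) (le_csInf ⟨_, hmem⟩ hlower)
end

section
/- Let G be a connected graph and m an integer with 2 ≤ m ≤ χ(G). Then there exists a spanning subgraph H of G with χ_G(H) = m. -/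
open SimpleGraph

attribute [local instance] Classical.propDecidable

variable {V : Type*}

lemma relChrom_set_nonempty [Fintype V] (G H : SimpleGraph V) :
    {n | ∃ f g : V → ℕ, (∀ v, f v < n) ∧ (∀ v, g v < n) ∧ CompatiblePair G H f g}.Nonempty := by
  classical
  set N := Fintype.card V with hN
  refine ⟨2 * N + 1, fun v => (Fintype.equivFin V v : ℕ),
    fun v => (Fintype.equivFin V v : ℕ) + N, ?_, ?_, ?_, ?_, ?_⟩
  · intro v; dsimp only; have := (Fintype.equivFin V v).isLt; omega
  · intro v; dsimp only; have := (Fintype.equivFin V v).isLt; omega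
  · intro a b hab h
    dsimp only at h
    exact hab.ne (Fintype.equivFin V |>.injective (Fin.val_injective h))
  · intro a b hab h
    dsimp only at h
    have : (Fintype.equivFin V a : ℕ) = (Fintype.equivFin V b : ℕ) := by omega
    exact hab.ne (Fintype.equivFin V |>.injective (Fin.val_injective this))
  · intro a b _ _
    dsimp only
    have := (Fintype.equivFin V a).isLt
    omega

lemma relChrom_mem [Fintype V] (G H : SimpleGraph V) :
    relChrom G H ∈ {n | ∃ f g : V → ℕ, (∀ v, f v < n) ∧ (∀ v, g v < n) ∧ CompatiblePair G H f g} :=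
  Nat.sInf_mem (relChrom_set_nonempty G H)

lemma relChrom_le (G H : SimpleGraph V) {n : ℕ}
    (h : ∃ f g : V → ℕ, (∀ v, f v < n) ∧ (∀ v, g v < n) ∧ CompatiblePair G H f g) :
    relChrom G H ≤ n := Nat.sInf_le h

lemma relChrom_step [Fintype V] (G H : SimpleGraph V) {u v : V} (huv : H.Adj u v) :
    relChrom G H ≤ relChrom G (H.deleteEdges {s(u,v)}) + 1 := by
  classical
  set H' := H.deleteEdges {s(u,v)} with hH'
  set n := relChrom G H' with hn
  obtain ⟨f, g, hf, hg, pf, pg, cross⟩ := relChrom_mem G H'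
  have hadj' : ∀ a b, H'.Adj a b ↔ H.Adj a b ∧ ¬ (s(a,b) = s(u,v)) := by
    intro a b; rw [hH', SimpleGraph.deleteEdges_adj]; simp
  have hle' : H' ≤ H := SimpleGraph.deleteEdges_le _
  set f' : V → ℕ := fun w => if w = u ∧ f u = f v then n else f w with hf'
  set g' : V → ℕ := fun w => if w = u ∧ g u = g v then n else g w with hg'
  apply relChrom_le
  refine ⟨f', g', ?_, ?_, ?_, ?_, ?_⟩
  · intro w; simp only [hf']; split
    · omega
    · exact lt_of_lt_of_le (hf w) (Nat.le_succ n)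
  · intro w; simp only [hg']; split
    · omega
    · exact lt_of_lt_of_le (hg w) (Nat.le_succ n)
  · -- proper for f'
    intro a b hab
    have hne : a ≠ b := hab.ne
    simp only [hf']
    by_cases ha : a = u ∧ f u = f v
    · rw [if_pos ha, if_neg (by rintro ⟨hb, -⟩; exact hne (ha.1.trans hb.symm))]
      exact (hf b).ne'
    · rw [if_neg ha]
      by_cases hb : b = u ∧ f u = f v
      · rw [if_pos hb]; exact (hf a).ne
      · rw [if_neg hb]
        -- neither changed; show f a ≠ f b
        by_cases he : s(a,b) = s(u,v)
        · rcases Sym2.eq_iff.mp he with ⟨rfl, rfl⟩ | ⟨rfl, rfl⟩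
          · intro h; exact ha ⟨rfl, h⟩
          · intro h; exact hb ⟨rfl, h.symm⟩
        · exact pf a b ((hadj' a b).mpr ⟨hab, he⟩)
  · -- proper for g'
    intro a b hab
    have hne : a ≠ b := hab.ne
    simp only [hg']
    by_cases ha : a = u ∧ g u = g v
    · rw [if_pos ha, if_neg (by rintro ⟨hb, -⟩; exact hne (ha.1.trans hb.symm))]
      exact (hg b).ne'
    · rw [if_neg ha]
      by_cases hb : b = u ∧ g u = g v
      · rw [if_pos hb]; exact (hg a).ne
      · rw [if_neg hb]
        by_cases he : s(a,b) = s(u,v)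
        · rcases Sym2.eq_iff.mp he with ⟨rfl, rfl⟩ | ⟨rfl, rfl⟩
          · intro h; exact ha ⟨rfl, h⟩
          · intro h; exact hb ⟨rfl, h.symm⟩
        · exact pg a b ((hadj' a b).mpr ⟨hab, he⟩)
  · -- cross condition
    intro a b hGab hHab
    have hH'ab : ¬ H'.Adj a b := fun h => hHab (hle' h)
    have hfg : f a ≠ g b := cross a b hGab hH'ab
    simp only [hf', hg']
    by_cases ha : a = u ∧ f u = f v
    · rw [if_pos ha]
      by_cases hb : b = u ∧ g u = g v
      · exact absurd (ha.1.trans hb.1.symm) hGab.ne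
      · rw [if_neg hb]; exact (hg b).ne'
    · rw [if_neg ha]
      by_cases hb : b = u ∧ g u = g v
      · rw [if_pos hb]; exact (hf a).ne
      · rw [if_neg hb]; exact hfg

lemma relChrom_le_two_of_bot [Fintype V] (G H : SimpleGraph V)
    (h : ∀ a b, ¬ H.Adj a b) : relChrom G H ≤ 2 := by
  apply relChrom_le
  exact ⟨fun _ => 0, fun _ => 1, fun _ => by norm_num, fun _ => by norm_num,
    fun a b hab => absurd hab (h a b), fun a b hab => absurd hab (h a b),
    fun a b _ _ => by norm_num⟩

lemma chrom_le_relChrom_self [Fintype V] (G : SimpleGraph V) :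
    chrom G ≤ relChrom G G := by
  obtain ⟨f, g, hf, hg, pf, pg, cross⟩ := relChrom_mem G G
  apply Nat.sInf_le
  exact ⟨SimpleGraph.Coloring.mk (fun w => (⟨f w, hf w⟩ : Fin (relChrom G G)))
    (fun {a b} hab => by simpa [Fin.ext_iff] using pf a b hab)⟩

lemma key_induction [Fintype V] (G : SimpleGraph V) (m : ℕ) (h2 : 2 ≤ m) :
    ∀ k (H : SimpleGraph V), H.edgeSet.ncard = k → H ≤ G → m ≤ relChrom G H →
      ∃ K : SimpleGraph V, K ≤ G ∧ relChrom G K = m := by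
  intro k
  induction k using Nat.strong_induction_on with
  | _ k ih =>
    intro H hcard hle hm
    rcases eq_or_lt_of_le hm with heq | hlt
    · exact ⟨H, hle, heq.symm⟩
    · have hne : ∃ a b, H.Adj a b := by
        by_contra hno
        push_neg at hno
        have := relChrom_le_two_of_bot G H hno
        omega
      obtain ⟨a, b, hab⟩ := hne
      set H' := H.deleteEdges {s(a,b)} with hH'
      have hstep : relChrom G H ≤ relChrom G H' + 1 := relChrom_step G H hab
      have hmem : s(a,b) ∈ H.edgeSet := hab
      have hfin : H.edgeSet.Finite := H.edgeSet.toFinite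
      have hcard' : H'.edgeSet.ncard < k := by
        rw [hH', SimpleGraph.edgeSet_deleteEdges, ← hcard]
        exact Set.ncard_diff_singleton_lt_of_mem hmem hfin
      exact ih _ hcard' H' rfl ((SimpleGraph.deleteEdges_le _).trans hle) (by omega)

theorem exists_spanning_subgraph_relChrom_eq [Fintype V] (G : SimpleGraph V)
    (hG : G.Connected) (m : ℕ) (h2 : 2 ≤ m) (hm : m ≤ chrom G) :
    ∃ H : SimpleGraph V, H ≤ G ∧ relChrom G H = m :=
  key_induction G m h2 G.edgeSet.ncard G rfl le_rfl
    (hm.trans (chrom_le_relChrom_self G))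
end
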